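/- Suppose V has dimension 3 over ℝ. Then for every element U of the Clifford algebra Cl(Q), writing Û = involute(U), Ũ = reverse(U), Û̃ = reverse(involute(U)), both of the following elements are scalars (lie in the range of the algebra map ℝ → Cl(Q)): the sum U·Ũ + U·Û + U·Û̃ + Û·Û̃ + Ũ·Û̃ + Û·Ũ, and the sum U·Û·Û̃ + U·Ũ·Û̃ + U·Û·Ũ + Û·Ũ·Û̃. -/

import Mathlib

/-!
Fix an orthogonal basis `e₀, e₁, e₂` of `V`. Then `Cl(Q)` is spanned by the eight blades, on
each of which the grade involution and the reversion act by a sign. Hence the Klein-group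
projections `x + x̂ + x̃ + x̂̃` and `x - x̂ - x̃ + x̂̃` land in the scalars and in the span of the
central pseudoscalar `e₀e₁e₂`; in particular every element fixed by the Clifford conjugation
`x ↦ x̂̃` is central, and every element fixed by both the conjugation and the grade involution is
a scalar.

For `U`, both `T = U + Û̃` and `N = U Û̃` are fixed by the conjugation, and so are
`T̂ = Û + Ũ` and `N̂ = Û Ũ`. Since these commute with `U`, the two sums equal `T̂ T + (N + N̂)`
and `T̂ N + N̂ T`, and each of `T̂ T`, `N + N̂`, `T̂ N + N̂ T` is fixed by the conjugation and by
the grade involution.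
-/

open CliffordAlgebra

theorem mem_of_add_add_add_mem {R A : Type*} [Semiring R] [Invertible (2 : R)] [AddCommMonoid A]
    [Module R A] {p : Submodule R A} {x : A} (h : x + x + x + x ∈ p) : x ∈ p := by
  have hx : x = (⅟2 : R) • (⅟2 : R) • (x + x + x + x) := by
    rw [show x + x + x + x = (x + x) + (x + x) by abel, smul_add,
      invOf_two_smul_add_invOf_two_smul, smul_add, invOf_two_smul_add_invOf_two_smul]
  rw [hx]
  exact p.smul_mem _ (p.smul_mem _ h)

theorem sum_pairwise_products_eq_of_commute {A : Type*} [Ring A] {U X Y Z : A}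
    (h : Commute U (X + Y)) :
    U * Y + U * X + U * Z + X * Z + Y * Z + X * Y = (X + Y) * (U + Z) + U * Z + X * Y := by
  rw [show U * Y + U * X = U * (X + Y) by noncomm_ring, h.eq]
  noncomm_ring

theorem sum_triple_products_eq_of_commute {A : Type*} [Ring A] {U X Y Z : A}
    (h : Commute U (X + Y)) (h' : Commute U (X * Y)) :
    U * X * Z + U * Y * Z + U * X * Y + X * Y * Z = (X + Y) * (U * Z) + X * Y * (U + Z) := by
  rw [show U * X * Z + U * Y * Z = U * (X + Y) * Z by noncomm_ring, h.eq,
    show U * X * Y = U * (X * Y) by noncomm_ring, h'.eq]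
  noncomm_ring

namespace CliffordAlgebra

variable {R M : Type*} [CommRing R] [AddCommGroup M] [Module R M] {Q : QuadraticForm R M}

theorem reverse_involute_reverse_involute (x : CliffordAlgebra Q) :
    reverse (involute (reverse (involute x))) = x := by
  rw [reverse_involute, reverse_reverse, involute_involute]

theorem ι_mul_self (m : M) : ι Q m * ι Q m = Q m • (1 : CliffordAlgebra Q) := by
  rw [ι_sq_scalar, Algebra.algebraMap_eq_smul_one]

theorem ι_mul_ι_mul_self (m : M) (x : CliffordAlgebra Q) : ι Q m * (ι Q m * x) = Q m • x := by
  rw [← mul_assoc, ι_mul_self, smul_mul_assoc, one_mul]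

section OrthogonalTriple

variable (Q) in
def pseudoscalar (e : Fin 3 → M) : CliffordAlgebra Q := ι Q (e 0) * (ι Q (e 1) * ι Q (e 2))

variable (Q) in
def blades (e : Fin 3 → M) : Set (CliffordAlgebra Q) :=
  {1, ι Q (e 0), ι Q (e 1), ι Q (e 2), ι Q (e 0) * ι Q (e 1), ι Q (e 0) * ι Q (e 2),
    ι Q (e 1) * ι Q (e 2), pseudoscalar Q e}

theorem involute_pseudoscalar (e : Fin 3 → M) :
    involute (pseudoscalar Q e) = -pseudoscalar Q e := by
  simp [pseudoscalar]

variable {e : Fin 3 → M} (he : ∀ i j, i ≠ j → Q.IsOrtho (e i) (e j))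
include he

theorem ι_mul_ι_of_lt {i j : Fin 3} (hij : i < j) :
    ι Q (e j) * ι Q (e i) = -(ι Q (e i) * ι Q (e j)) :=
  ι_mul_ι_comm_of_isOrtho (he j i hij.ne')

theorem ι_mul_ι_mul_of_lt {i j : Fin 3} (hij : i < j) (x : CliffordAlgebra Q) :
    ι Q (e j) * (ι Q (e i) * x) = -(ι Q (e i) * (ι Q (e j) * x)) :=
  ι_mul_ι_mul_of_isOrtho x (he j i hij.ne')

theorem mul_ι_mem_span_blades {x : CliffordAlgebra Q} (hx : x ∈ Submodule.span R (blades Q e))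
    (k : Fin 3) : x * ι Q (e k) ∈ Submodule.span R (blades Q e) := by
  induction hx using Submodule.span_induction with
  | mem g hg =>
    simp only [blades, pseudoscalar, Set.mem_insert_iff, Set.mem_singleton_iff] at hg
    fin_cases k <;> rcases hg with rfl | rfl | rfl | rfl | rfl | rfl | rfl | rfl <;>
      simp only [Fin.zero_eta, Fin.mk_one, Fin.reduceFinMk, Fin.isValue, Fin.reduceLT, mul_assoc,
        one_mul, mul_one, ι_mul_self, ι_mul_ι_mul_self, ι_mul_ι_of_lt he, ι_mul_ι_mul_of_lt he,
        mul_neg, neg_neg, mul_smul_comm] <;>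
      (try apply Submodule.neg_mem) <;> (try apply Submodule.smul_mem) <;>
      apply Submodule.subset_span <;>
      simp only [blades, pseudoscalar, Set.mem_insert_iff, Set.mem_singleton_iff, true_or, or_true]
  | zero => simp
  | add x y _ _ hx hy => rw [add_mul]; exact add_mem hx hy
  | smul r x _ hx => rw [smul_mul_assoc]; exact Submodule.smul_mem _ r hx

theorem reverse_pseudoscalar : reverse (pseudoscalar Q e) = -pseudoscalar Q e := by
  simp only [pseudoscalar, reverse.map_mul, reverse_ι, mul_assoc, ι_mul_ι_of_lt he,
    ι_mul_ι_mul_of_lt he, Fin.isValue, Fin.reduceLT, mul_neg, neg_mul, neg_neg]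

theorem commute_pseudoscalar_ι (k : Fin 3) : Commute (pseudoscalar Q e) (ι Q (e k)) := by
  fin_cases k <;>
    simp only [Commute, SemiconjBy, pseudoscalar, Fin.zero_eta, Fin.mk_one, Fin.reduceFinMk,
      Fin.isValue, Fin.reduceLT, mul_assoc, ι_mul_self, ι_mul_ι_mul_self, ι_mul_ι_of_lt he,
      ι_mul_ι_mul_of_lt he, mul_neg, neg_neg, mul_smul_comm, mul_one]

end OrthogonalTriple

section OrthogonalBasis

variable {b : Module.Basis (Fin 3) R M} (hb : ∀ i j, i ≠ j → Q.IsOrtho (b i) (b j))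
include hb

theorem span_blades_eq_top : Submodule.span R (blades Q b) = ⊤ := by
  refine Submodule.eq_top_iff'.mpr fun x => ?_
  induction x using CliffordAlgebra.right_induction with
  | algebraMap r =>
    rw [Algebra.algebraMap_eq_smul_one]
    exact Submodule.smul_mem _ r (Submodule.subset_span (by simp [blades]))
  | add x y hx hy => exact add_mem hx hy
  | mul_ι m x hx =>
    rw [← b.sum_repr m, map_sum, Finset.mul_sum]
    refine Submodule.sum_mem _ fun k _ => ?_
    rw [map_smul, mul_smul_comm]
    exact Submodule.smul_mem _ _ (mul_ι_mem_span_blades hb hx k)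

theorem pseudoscalar_mem_center :
    pseudoscalar Q b ∈ Subalgebra.center R (CliffordAlgebra Q) := by
  rw [Subalgebra.mem_center_iff]
  intro x
  refine (?_ : Commute (pseudoscalar Q b) x).eq.symm
  induction x using CliffordAlgebra.induction with
  | algebraMap r => exact Algebra.commute_algebraMap_right r _
  | ι m =>
    rw [← b.sum_repr m, map_sum]
    exact Commute.sum_right _ _ _ fun k _ => by
      rw [map_smul]; exact (commute_pseudoscalar_ι hb k).smul_right _
  | mul x y hx hy => exact hx.mul_right hy
  | add x y hx hy => exact hx.add_right hy

theorem mem_of_blades_subset {p : Submodule R (CliffordAlgebra Q)} (h : blades Q b ⊆ p)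
    (x : CliffordAlgebra Q) : x ∈ p := by
  have := Submodule.span_le.mpr h
  rw [span_blades_eq_top hb] at this
  exact this Submodule.mem_top

theorem add_involute_add_reverse_add_reverse_involute_mem_bot (x : CliffordAlgebra Q) :
    x + involute x + reverse x + reverse (involute x) ∈
      (⊥ : Subalgebra R (CliffordAlgebra Q)) := by
  let P : CliffordAlgebra Q →ₗ[R] CliffordAlgebra Q :=
    LinearMap.id + involute.toLinearMap + reverse + reverse ∘ₗ involute.toLinearMap
  refine mem_of_blades_subset hb (p := (Subalgebra.toSubmodule ⊥).comap P) ?_ x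
  intro g hg
  simp only [blades, Set.mem_insert_iff, Set.mem_singleton_iff] at hg
  rcases hg with rfl | rfl | rfl | rfl | rfl | rfl | rfl | rfl <;>
    simp [P, -Algebra.coe_bot, involute_pseudoscalar, reverse_pseudoscalar hb, ι_mul_ι_of_lt hb,
      add_mem_cancel_right, one_mem]

theorem sub_involute_sub_reverse_add_reverse_involute_mem_span (x : CliffordAlgebra Q) :
    x - involute x - reverse x + reverse (involute x) ∈ R ∙ pseudoscalar Q b := by
  let P : CliffordAlgebra Q →ₗ[R] CliffordAlgebra Q :=
    LinearMap.id - involute.toLinearMap - reverse + reverse ∘ₗ involute.toLinearMap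
  refine mem_of_blades_subset hb (p := (R ∙ pseudoscalar Q b).comap P) ?_ x
  intro g hg
  simp only [blades, Set.mem_insert_iff, Set.mem_singleton_iff] at hg
  rcases hg with rfl | rfl | rfl | rfl | rfl | rfl | rfl | rfl <;>
    simp [P, involute_pseudoscalar, reverse_pseudoscalar hb, ι_mul_ι_of_lt hb,
      add_mem_cancel_right, Submodule.mem_span_singleton_self]

end OrthogonalBasis

section Conjugation

variable [Invertible (2 : R)] {b : Module.Basis (Fin 3) R M}
  (hb : ∀ i j, i ≠ j → Q.IsOrtho (b i) (b j))
include hb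

theorem mem_center_of_reverse_involute_eq {x : CliffordAlgebra Q}
    (hx : reverse (involute x) = x) : x ∈ Subalgebra.center R (CliffordAlgebra Q) := by
  refine mem_of_add_add_add_mem (p := (Subalgebra.center R _).toSubmodule) ?_
  have hsum : x + x + x + x = (x + involute x + reverse x + reverse (involute x)) +
      (x - involute x - reverse x + reverse (involute x)) := by
    rw [hx]; abel
  rw [hsum]
  refine add_mem (bot_le (a := Subalgebra.center R _)
    (add_involute_add_reverse_add_reverse_involute_mem_bot hb x)) ?_
  exact (Submodule.span_singleton_le_iff_mem _ _).mpr (pseudoscalar_mem_center hb)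
    (sub_involute_sub_reverse_add_reverse_involute_mem_span hb x)

theorem mem_bot_of_reverse_involute_eq {x : CliffordAlgebra Q} (hx : reverse (involute x) = x)
    (hx' : involute x = x) : x ∈ (⊥ : Subalgebra R (CliffordAlgebra Q)) := by
  have hrev : reverse x = x := by rwa [hx'] at hx
  refine mem_of_add_add_add_mem (p := Subalgebra.toSubmodule ⊥) ?_
  simpa only [hx, hx', hrev, Subalgebra.mem_toSubmodule] using
    add_involute_add_reverse_add_reverse_involute_mem_bot hb x

theorem involute_mul_add_involute_mul_mem_bot {z w : CliffordAlgebra Q}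
    (hz : reverse (involute z) = z) (hw : reverse (involute w) = w) :
    involute z * w + involute w * z ∈ (⊥ : Subalgebra R (CliffordAlgebra Q)) := by
  have hzc := Subalgebra.mem_center_iff.mp (mem_center_of_reverse_involute_eq hb hz)
  have hwc := Subalgebra.mem_center_iff.mp (mem_center_of_reverse_involute_eq hb hw)
  have hz' : reverse z = involute z := by
    rw [← involute_involute (reverse z), ← reverse_involute, hz]
  have hw' : reverse w = involute w := by
    rw [← involute_involute (reverse w), ← reverse_involute, hw]
  refine mem_bot_of_reverse_involute_eq hb ?_ ?_
  · simp only [map_add, map_mul, reverse.map_mul, involute_involute, hz, hw, hz', hw', hzc, hwc]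
  · simp only [map_add, map_mul, involute_involute, hzc, hwc, add_comm]

theorem involute_mul_self_mem_bot {z : CliffordAlgebra Q} (hz : reverse (involute z) = z) :
    involute z * z ∈ (⊥ : Subalgebra R (CliffordAlgebra Q)) := by
  rw [← invOf_two_smul_add_invOf_two_smul R (involute z * z), ← smul_add]
  exact Subalgebra.smul_mem _ (involute_mul_add_involute_mul_mem_bot hb hz hz) _

theorem add_involute_mem_bot {z : CliffordAlgebra Q} (hz : reverse (involute z) = z) :
    z + involute z ∈ (⊥ : Subalgebra R (CliffordAlgebra Q)) := by
  refine mem_bot_of_reverse_involute_eq hb ?_ ?_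
  · rw [map_add, map_add, reverse_involute (involute z), hz]
  · rw [map_add, involute_involute, add_comm]

end Conjugation

end CliffordAlgebra

theorem QuadraticForm.exists_basis_isOrtho {K V : Type*} [Field K] [Invertible (2 : K)]
    [AddCommGroup V] [Module K V] [FiniteDimensional K V] (Q : QuadraticForm K V) {n : ℕ}
    (h : Module.finrank K V = n) :
    ∃ b : Module.Basis (Fin n) K V, ∀ i j, i ≠ j → Q.IsOrtho (b i) (b j) := by
  obtain ⟨b, hb⟩ :=
    LinearMap.BilinForm.exists_orthogonal_basis (QuadraticForm.associated_isSymm K Q)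
  refine ⟨b.reindex (finCongr h), fun i j hij => ?_⟩
  rw [Module.Basis.reindex_apply, Module.Basis.reindex_apply]
  exact QuadraticMap.associated_isOrtho.mp (hb ((finCongr h).symm.injective.ne hij))

theorem stmt_16 {V : Type*} [AddCommGroup V] [Module ℝ V] (Q : QuadraticForm ℝ V)
    (h : Module.finrank ℝ V = 3) (U : CliffordAlgebra Q) :
    (U * reverse U + U * involute U + U * reverse (involute U) +
        involute U * reverse (involute U) + reverse U * reverse (involute U) +
        involute U * reverse U ∈
      Set.range (algebraMap ℝ (CliffordAlgebra Q))) ∧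
    (U * involute U * reverse (involute U) + U * reverse U * reverse (involute U) +
        U * involute U * reverse U + involute U * reverse U * reverse (involute U) ∈
      Set.range (algebraMap ℝ (CliffordAlgebra Q))) := by
  have : FiniteDimensional ℝ V := Module.finite_of_finrank_pos (by omega)
  obtain ⟨b, hb⟩ := Q.exists_basis_isOrtho h
  set T := U + reverse (involute U)
  set N := U * reverse (involute U)
  have hT : reverse (involute T) = T := by
    rw [map_add, map_add, reverse_involute_reverse_involute, add_comm]
  have hN : reverse (involute N) = N := by
    rw [map_mul, reverse.map_mul, reverse_involute_reverse_involute]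
  have hT' : involute T = involute U + reverse U := by
    rw [map_add, reverse_involute, involute_involute]
  have hN' : involute N = involute U * reverse U := by
    rw [map_mul, reverse_involute, involute_involute]
  have hUT : Commute U (involute U + reverse U) := hT' ▸ Subalgebra.mem_center_iff.mp
    (mem_center_of_reverse_involute_eq hb (by rw [reverse_involute, hT])) U
  have hUN : Commute U (involute U * reverse U) := hN' ▸ Subalgebra.mem_center_iff.mp
    (mem_center_of_reverse_involute_eq hb (by rw [reverse_involute, hN])) U
  refine ⟨Algebra.mem_bot.mp ?_, Algebra.mem_bot.mp ?_⟩
  · rw [sum_pairwise_products_eq_of_commute hUT, add_assoc, ← hT', ← hN']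
    exact add_mem (involute_mul_self_mem_bot hb hT) (add_involute_mem_bot hb hN)
  · rw [sum_triple_products_eq_of_commute hUT hUN, ← hT', ← hN']
    exact involute_mul_add_involute_mul_mem_bot hb hT hN
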